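/- arXiv:1512.00218 — 4 statements merged into one kernel-verified Lean document; each statement's English description precedes it below -/
import Mathlib

section
/- The function K_0(x) = exp(-1/(1-x^2)) for |x| < 1 and K_0(x) = 0 otherwise satisfies: for every β > 0 and every integer j with 1 ≤ j ≤ ⌊β⌋, there exists a constant C(β,j) such that |K_0^{(j)}(x)| ≤ C(β,j) |K_0(x)|^{(β-j)/β} for all x ∈ ℝ. -/
/-! On `(-1, 1)` every derivative of `K0` is `p_j(x) (1 - x²)^(-2j) K0(x)` for a polynomial `p_j`,
and all derivatives vanish outside `(-1, 1)`. With `θ = (β - j) / β < 1`, split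
`K0 = K0^θ · exp (-(1 - θ) / (1 - x²))`: since `t^m e^(-ct)` is bounded on `t ≥ 0`, the second
factor absorbs the pole `(1 - x²)^(-2j)`. -/

open Real

noncomputable def K0 : ℝ → ℝ := fun x => if |x| < 1 then Real.exp (-1 / (1 - x ^ 2)) else 0

open Polynomial Set Filter Topology
open scoped Nat

lemma pow_mul_exp_neg_mul_le {c t : ℝ} (hc : 0 < c) (ht : 0 ≤ t) (m : ℕ) :
    t ^ m * exp (-(c * t)) ≤ m ! / c ^ m := by
  have h := pow_div_factorial_le_exp (x := c * t) (mul_nonneg hc.le ht) m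
  rw [le_div_iff₀ (pow_pos hc m), exp_neg]
  rw [div_le_iff₀ (by positivity)] at h
  calc t ^ m * (exp (c * t))⁻¹ * c ^ m = (c * t) ^ m * (exp (c * t))⁻¹ := by ring
    _ ≤ exp (c * t) * m ! * (exp (c * t))⁻¹ := by gcongr
    _ = m ! := by field_simp

lemma hasDerivAt_eval_div_pow_mul_exp (p : ℝ[X]) (m : ℕ) {x : ℝ} (hx : 1 - x ^ 2 ≠ 0) :
    HasDerivAt (fun y => p.eval y / (1 - y ^ 2) ^ m * exp (-1 / (1 - y ^ 2)))
      ((derivative p * (1 - X ^ 2) ^ 2 + C (2 * m : ℝ) * X * p * (1 - X ^ 2) - 2 * X * p).eval x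
        / (1 - x ^ 2) ^ (m + 2) * exp (-1 / (1 - x ^ 2))) x := by
  have hu : HasDerivAt (fun y : ℝ => 1 - y ^ 2) (-(2 * x)) x := by
    simpa using (hasDerivAt_pow 2 x).const_sub 1
  have hexp : HasDerivAt (fun y => exp (-1 / (1 - y ^ 2)))
      (exp (-1 / (1 - x ^ 2)) * (-(2 * x) / (1 - x ^ 2) ^ 2)) x := by
    simpa only [neg_div, one_div, neg_neg] using ((hu.fun_inv hx).fun_neg).exp
  refine (((p.hasDerivAt x).fun_div (hu.fun_pow m) (pow_ne_zero m hx)).fun_mul hexp).congr_deriv ?_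
  simp only [eval_sub, eval_add, eval_mul, eval_pow, eval_C, eval_X, eval_one, eval_ofNat]
  rcases m with _ | m
  · field_simp
    ring
  · simp only [Nat.add_sub_cancel]
    field_simp
    ring

lemma K0_eq_expNegInvGlue : K0 = fun x => expNegInvGlue (1 - x ^ 2) := by
  funext x
  simp only [K0, expNegInvGlue]
  rcases lt_or_ge |x| 1 with h | h
  · rw [if_pos h, if_neg (by nlinarith [sq_abs x, abs_nonneg x]), neg_div, one_div]
  · rw [if_neg (not_lt.mpr h), if_pos (by nlinarith [sq_abs x, abs_nonneg x])]

lemma K0_nonneg (x : ℝ) : 0 ≤ K0 x := by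
  rw [K0_eq_expNegInvGlue]
  exact expNegInvGlue.nonneg _

lemma contDiff_K0 {n : ℕ∞} : ContDiff ℝ n K0 := by
  rw [K0_eq_expNegInvGlue]
  exact expNegInvGlue.contDiff.comp (contDiff_const.sub (contDiff_id.pow 2))

lemma K0_of_mem_Ioo {x : ℝ} (hx : x ∈ Ioo (-1 : ℝ) 1) : K0 x = exp (-1 / (1 - x ^ 2)) :=
  if_pos (abs_lt.2 hx)

lemma K0_eqOn_zero : EqOn K0 0 (Ioo (-1 : ℝ) 1)ᶜ :=
  fun _ hx => if_neg fun h => hx (abs_lt.1 h)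

lemma iteratedDeriv_K0_eq_zero_of_notMem_Ioo (n : ℕ) {x : ℝ} (hx : x ∉ Ioo (-1 : ℝ) 1) :
    iteratedDeriv n K0 x = 0 := by
  have hzero : EqOn (iteratedDeriv n K0) 0 (Icc (-1 : ℝ) 1)ᶜ := by
    have h := EqOn.iteratedDeriv_of_isOpen
      (K0_eqOn_zero.mono (compl_subset_compl.2 Ioo_subset_Icc_self)) isClosed_Icc.isOpen_compl n
    intro y hy
    simpa [Pi.zero_def, iteratedDeriv_const] using h hy
  -- the zero set of a continuous function is closed, so it contains `±1` as well
  have hclosed : IsClosed {x | iteratedDeriv n K0 x = 0} :=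
    isClosed_eq ((contDiff_K0 (n := ⊤)).continuous_iteratedDeriv n (by exact_mod_cast le_top))
      continuous_const
  have h := hclosed.closure_subset_iff.2 hzero
  rw [closure_compl, interior_Icc] at h
  exact h hx

noncomputable def bumpPoly : ℕ → ℝ[X]
  | 0 => 1
  | n + 1 => derivative (bumpPoly n) * (1 - X ^ 2) ^ 2
      + C (4 * n : ℝ) * X * bumpPoly n * (1 - X ^ 2) - 2 * X * bumpPoly n

lemma iteratedDeriv_K0_of_mem_Ioo (n : ℕ) {x : ℝ} (hx : x ∈ Ioo (-1 : ℝ) 1) :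
    iteratedDeriv n K0 x
      = (bumpPoly n).eval x / (1 - x ^ 2) ^ (2 * n) * exp (-1 / (1 - x ^ 2)) := by
  induction n generalizing x with
  | zero => simp [bumpPoly, K0_of_mem_Ioo hx]
  | succ n ih =>
    have hlocal : iteratedDeriv n K0 =ᶠ[𝓝 x]
        fun y => (bumpPoly n).eval y / (1 - y ^ 2) ^ (2 * n) * exp (-1 / (1 - y ^ 2)) :=
      eventually_of_mem (isOpen_Ioo.mem_nhds hx) fun y hy => ih hy
    have hu : 1 - x ^ 2 ≠ 0 := by nlinarith [hx.1, hx.2]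
    rw [iteratedDeriv_succ, hlocal.deriv_eq, (hasDerivAt_eval_div_pow_mul_exp _ _ hu).deriv,
      bumpPoly]
    push_cast
    ring_nf

lemma exists_abs_iteratedDeriv_K0_le_rpow (n : ℕ) {θ : ℝ} (hθ : θ < 1) :
    ∃ C, 0 < C ∧ ∀ x, |iteratedDeriv n K0 x| ≤ C * K0 x ^ θ := by
  obtain ⟨M, hM⟩ := isCompact_Icc.exists_bound_of_continuousOn
    (bumpPoly n).continuous.continuousOn (s := Icc (-1 : ℝ) 1)
  set B := (2 * n)! / (1 - θ) ^ (2 * n)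
  have hB : 0 < B := div_pos (by positivity) (pow_pos (sub_pos.2 hθ) _)
  refine ⟨max M 1 * B, mul_pos (lt_max_of_lt_right one_pos) hB, fun x => ?_⟩
  by_cases hx : x ∈ Ioo (-1 : ℝ) 1
  · set u := 1 - x ^ 2 with hu_def
    have hu : 0 < u := by nlinarith [hx.1, hx.2]
    have hpoly : |(bumpPoly n).eval x| ≤ max M 1 :=
      (hM x (Ioo_subset_Icc_self hx)).trans (le_max_left _ _)
    have hdecay : (u⁻¹) ^ (2 * n) * exp (-((1 - θ) * u⁻¹)) ≤ B :=
      pow_mul_exp_neg_mul_le (sub_pos.2 hθ) (inv_nonneg.2 hu.le) _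
    have hsplit : exp (-1 / u) = exp (-((1 - θ) * u⁻¹)) * K0 x ^ θ := by
      rw [K0_of_mem_Ioo hx, ← hu_def, ← exp_mul, ← exp_add]
      ring_nf
    calc |iteratedDeriv n K0 x|
        = |(bumpPoly n).eval x| * ((u⁻¹) ^ (2 * n) * exp (-((1 - θ) * u⁻¹))) * K0 x ^ θ := by
          rw [iteratedDeriv_K0_of_mem_Ioo n hx, hsplit, abs_mul, abs_mul, abs_div,
            abs_of_pos (pow_pos hu _), abs_of_pos (exp_pos _),
            abs_of_nonneg (rpow_nonneg (K0_nonneg x) θ)]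
          ring
      _ ≤ max M 1 * B * K0 x ^ θ := by gcongr; exact rpow_nonneg (K0_nonneg x) θ
  · rw [iteratedDeriv_K0_eq_zero_of_notMem_Ioo n hx, abs_zero]
    exact mul_nonneg (by positivity) (rpow_nonneg (K0_nonneg x) θ)

theorem stmt_0_general (β : ℝ) (hβ : 0 < β) (j : ℕ) (hj1 : 1 ≤ j) :
    ∃ C : ℝ, 0 < C ∧ ∀ x : ℝ,
      |iteratedDeriv j K0 x| ≤ C * |K0 x| ^ ((β - j) / β) := by
  have hθ : (β - j) / β < 1 := by
    have hj : (0 : ℝ) < j := by exact_mod_cast hj1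
    rw [div_lt_one hβ]
    linarith
  simpa only [abs_of_nonneg (K0_nonneg _)] using exists_abs_iteratedDeriv_K0_le_rpow j hθ

theorem stmt_0 (β : ℝ) (hβ : 0 < β) (j : ℕ) (hj1 : 1 ≤ j) (hjβ : (j : ℝ) < β) :
    ∃ C : ℝ, 0 < C ∧ ∀ x : ℝ,
      |iteratedDeriv j K0 x| ≤ C * |K0 x| ^ ((β - j) / β) :=
  stmt_0_general β hβ j hj1
end

section
/- Let β > 0 and let f : [0,1] → ℝ be a non-negative function in the class H^β, i.e. f is ⌊β⌋-times differentiable with |f^{(j)}(x)| ≤ ‖f‖^{j/β} · f(x)^{(β-j)/β} for all x ∈ [0,1] and 1 ≤ j ≤ ⌊β⌋, where ‖f‖ := ‖f‖_{H^β} is a fixed finite constant, and the ⌊β⌋-th derivative is (β-⌊β⌋)-Hölder with constant at most ‖f‖. Let a > 0 satisfy (e^a - 1) + a^β/⌊β⌋! ≤ 1/2. Then for all x ∈ [0,1] and all h with x + h ∈ [0,1] and |h| ≤ a·(f(x)/‖f‖)^{1/β}, one has |f(x+h) - f(x)| ≤ f(x)/2; in particular f(x)/2 ≤ f(x+h) ≤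 3f(x)/2. -/
/-!
Taylor's formula of order `k0 - 1` with Lagrange remainder, recentred at `x`, reads
`f (x + h) - f x = ∑_{1 ≤ j ≤ k0} f⁽ʲ⁾(x) hʲ / j! + (f⁽ᵏ⁰⁾(ξ) - f⁽ᵏ⁰⁾(x)) hᵏ⁰ / k0!`
for some `ξ` between `x` and `x + h` (for `k0 = 0` take `ξ = x + h`).
At the scale `|h| ≤ a (f x / R)^(1/β)` the flatness bounds turn each `|f⁽ʲ⁾(x)| |h|ʲ` into at
most `aʲ f x`, and the Hölder bound turns the remainder into at most `a^β f x / k0!`. Summing,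
`|f (x + h) - f x| ≤ (eᵃ - 1 + a^β / k0!) f x ≤ f x / 2`.
-/

open Real Set

open Finset in
theorem exists_sub_eq_sum_add_iteratedDeriv_sub {f : ℝ → ℝ} {n : ℕ} (hf : ContDiff ℝ n f)
    (x y : ℝ) :
    ∃ ξ ∈ uIcc x y, f y - f x =
      ∑ i ∈ range n, iteratedDeriv (i + 1) f x * (y - x) ^ (i + 1) / (i + 1).factorial +
        (iteratedDeriv n f ξ - iteratedDeriv n f x) * (y - x) ^ n / n.factorial := by
  rcases n with _ | m
  · exact ⟨y, right_mem_uIcc, by simp⟩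
  rcases eq_or_ne x y with rfl | hxy
  · exact ⟨x, left_mem_uIcc, by simp⟩
  obtain ⟨ξ, hξ, hLagrange⟩ :=
    taylor_mean_remainder_lagrange_iteratedDeriv hxy (hf.contDiffOn (n := m + 1))
  have hwithin : ∀ k ≤ m, iteratedDerivWithin k f (uIcc x y) x = iteratedDeriv k f x :=
    fun k hk => iteratedDerivWithin_eq_iteratedDeriv (uniqueDiffOn_uIcc hxy)
      ((hf.of_le (by exact_mod_cast hk.trans m.le_succ)).contDiffAt) left_mem_uIcc
  have htaylor : taylorWithinEval f m (uIcc x y) x y =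
      f x + ∑ i ∈ range m, iteratedDeriv (i + 1) f x * (y - x) ^ (i + 1) / (i + 1).factorial := by
    rw [taylor_within_apply, sum_range_succ', add_comm]
    congr 1
    · simp [hwithin 0 m.zero_le]
    · refine sum_congr rfl fun i hi => ?_
      rw [hwithin (i + 1) (mem_range.mp hi), smul_eq_mul]
      ring
  refine ⟨ξ, uIoo_subset_uIcc_self hξ, ?_⟩
  rw [htaylor] at hLagrange
  rw [sum_range_succ]
  linear_combination hLagrange

theorem sum_range_pow_succ_div_factorial_le_exp_sub_one {a : ℝ} (ha : 0 ≤ a) (n : ℕ) :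
    ∑ i ∈ Finset.range n, a ^ (i + 1) / (i + 1).factorial ≤ exp a - 1 := by
  have h := sum_le_exp_of_nonneg ha (n + 1)
  rw [Finset.sum_range_succ'] at h
  norm_num at h
  linarith

theorem rpow_mul_rpow_mul_rpow_le {β s R F a t : ℝ} (hβ : 0 < β) (hs : 0 ≤ s) (hR : 0 < R)
    (hF : 0 ≤ F) (ha : 0 ≤ a) (ht : 0 ≤ t) (hta : t ≤ a * (F / R) ^ (1 / β)) :
    R ^ (s / β) * F ^ ((β - s) / β) * t ^ s ≤ a ^ s * F := by
  have hFR : 0 ≤ F / R := by positivity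
  have hts : t ^ s ≤ a ^ s * (F ^ (s / β) / R ^ (s / β)) := calc
    t ^ s ≤ (a * (F / R) ^ (1 / β)) ^ s := rpow_le_rpow ht hta hs
    _ = a ^ s * (F ^ (s / β) / R ^ (s / β)) := by
      rw [mul_rpow ha (rpow_nonneg hFR _), ← rpow_mul hFR, one_div_mul_eq_div,
        div_rpow hF hR.le]
  have hsplit : F ^ ((β - s) / β) * F ^ (s / β) = F := by
    have hsum : (β - s) / β + s / β = 1 := by field_simp; ring
    rw [← rpow_add' hF (by rw [hsum]; exact one_ne_zero), hsum, rpow_one]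
  calc R ^ (s / β) * F ^ ((β - s) / β) * t ^ s
      ≤ R ^ (s / β) * F ^ ((β - s) / β) * (a ^ s * (F ^ (s / β) / R ^ (s / β))) := by gcongr
    _ = a ^ s * (F ^ ((β - s) / β) * F ^ (s / β)) * (R ^ (s / β) / R ^ (s / β)) := by ring
    _ = a ^ s * F := by rw [hsplit, div_self (rpow_pos_of_pos hR _).ne', mul_one]

theorem abs_sum_mul_pow_div_factorial_le {β R F a t : ℝ} {n : ℕ} {D : ℕ → ℝ} (hβ : 0 < β)
    (hR : 0 < R) (hF : 0 ≤ F) (ha : 0 ≤ a)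
    (hD : ∀ j : ℕ, 1 ≤ j → j ≤ n → |D j| ≤ R ^ ((j : ℝ) / β) * F ^ ((β - j) / β))
    (ht : |t| ≤ a * (F / R) ^ (1 / β)) :
    |∑ i ∈ Finset.range n, D (i + 1) * t ^ (i + 1) / (i + 1).factorial| ≤ (exp a - 1) * F := by
  have hterm : ∀ i ∈ Finset.range n, |D (i + 1) * t ^ (i + 1) / (i + 1).factorial|
      ≤ a ^ (i + 1) / (i + 1).factorial * F := by
    intro i hi
    have hflat := rpow_mul_rpow_mul_rpow_le hβ (Nat.cast_nonneg (i + 1)) hR hF ha (abs_nonneg t) ht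
    simp only [rpow_natCast] at hflat
    rw [abs_div, abs_mul, abs_pow, Nat.abs_cast, div_mul_eq_mul_div]
    gcongr ?_ / _
    calc |D (i + 1)| * |t| ^ (i + 1)
        ≤ R ^ (((i + 1 : ℕ) : ℝ) / β) * F ^ ((β - (i + 1 : ℕ)) / β) * |t| ^ (i + 1) := by
          gcongr
          exact hD (i + 1) le_add_self (Finset.mem_range.mp hi)
      _ ≤ a ^ (i + 1) * F := hflat
  calc _ ≤ ∑ i ∈ Finset.range n, a ^ (i + 1) / (i + 1).factorial * F :=
        (Finset.abs_sum_le_sum_abs _ _).trans (Finset.sum_le_sum hterm)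
    _ = (∑ i ∈ Finset.range n, a ^ (i + 1) / (i + 1).factorial) * F := (Finset.sum_mul ..).symm
    _ ≤ (exp a - 1) * F := by gcongr; exact sum_range_pow_succ_div_factorial_le_exp_sub_one ha n

theorem abs_mul_pow_div_factorial_le {β R F a t s δ : ℝ} {n : ℕ} (hβ : 0 < β)
    (hnβ : (n : ℝ) ≤ β) (hR : 0 < R) (hF : 0 ≤ F) (ha : 0 ≤ a)
    (hδ : |δ| ≤ R * |s| ^ (β - n)) (hst : |s| ≤ |t|) (ht : |t| ≤ a * (F / R) ^ (1 / β)) :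
    |δ * t ^ n / n.factorial| ≤ a ^ β / n.factorial * F := by
  have hflat := rpow_mul_rpow_mul_rpow_le hβ hβ.le hR hF ha (abs_nonneg t) ht
  rw [div_self hβ.ne', sub_self, zero_div, rpow_zero, rpow_one, mul_one] at hflat
  rw [abs_div, abs_mul, abs_pow, Nat.abs_cast, div_mul_eq_mul_div]
  gcongr ?_ / _
  calc |δ| * |t| ^ n ≤ R * |t| ^ (β - n) * |t| ^ n := by
        gcongr
        exact hδ.trans (by gcongr)
    _ = R * |t| ^ β := by
        rw [mul_assoc, ← rpow_natCast, ← rpow_add' (abs_nonneg t) (by simpa using hβ.ne'),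
          sub_add_cancel]
    _ ≤ a ^ β * F := hflat

theorem stmt_3_general (β : ℝ) (hβ : 0 < β) (k0 : ℕ) (hk0 : (k0 : ℝ) < β)
    (f : ℝ → ℝ) (R : ℝ) (hR : 0 < R)
    (hf : ContDiff ℝ k0 f)
    (hpos : ∀ x ∈ Icc (0:ℝ) 1, 0 ≤ f x)
    (hderiv : ∀ j : ℕ, 1 ≤ j → j ≤ k0 → ∀ x ∈ Icc (0:ℝ) 1,
      |iteratedDeriv j f x| ≤ R ^ ((j : ℝ) / β) * f x ^ ((β - j) / β))
    (hHolder : ∀ x ∈ Icc (0:ℝ) 1, ∀ y ∈ Icc (0:ℝ) 1,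
      |iteratedDeriv k0 f x - iteratedDeriv k0 f y| ≤ R * |x - y| ^ (β - k0))
    (a : ℝ) (ha : 0 < a)
    (haβ : (Real.exp a - 1) + a ^ β / (Nat.factorial k0) ≤ 1 / 2) :
    ∀ x ∈ Icc (0:ℝ) 1, ∀ h : ℝ, x + h ∈ Icc (0:ℝ) 1 →
      |h| ≤ a * (f x / R) ^ (1 / β) →
      |f (x + h) - f x| ≤ f x / 2 ∧
      f x / 2 ≤ f (x + h) ∧ f (x + h) ≤ 3 * f x / 2 := by
  intro x hx h hxh hh
  have hfx := hpos x hx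
  obtain ⟨ξ, hξ, htaylor⟩ := exists_sub_eq_sum_add_iteratedDeriv_sub hf x (x + h)
  rw [add_sub_cancel_left] at htaylor
  have hpoly := abs_sum_mul_pow_div_factorial_le hβ hR hfx ha.le
    (fun j hj hjk => hderiv j hj hjk x hx) hh
  have hrem := abs_mul_pow_div_factorial_le hβ hk0.le hR hfx ha.le
    (hHolder ξ (uIcc_subset_Icc hx hxh hξ) x hx) (by simpa using abs_sub_left_of_mem_uIcc hξ) hh
  have hmain : |f (x + h) - f x| ≤ f x / 2 := calc
    |f (x + h) - f x| ≤ (exp a - 1) * f x + a ^ β / k0.factorial * f x :=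
        htaylor ▸ (abs_add_le _ _).trans (add_le_add hpoly hrem)
    _ = ((exp a - 1) + a ^ β / k0.factorial) * f x := by ring
    _ ≤ 1 / 2 * f x := mul_le_mul_of_nonneg_right haβ hfx
    _ = f x / 2 := by ring
  obtain ⟨hlower, hupper⟩ := abs_le.mp hmain
  exact ⟨hmain, by linarith, by linarith⟩

theorem stmt_3 (β : ℝ) (hβ : 0 < β) (k0 : ℕ) (hk0 : (k0 : ℝ) < β) (hk0' : β ≤ k0 + 1)
    (f : ℝ → ℝ) (R : ℝ) (hR : 0 < R)
    (hf : ContDiff ℝ k0 f)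
    (hpos : ∀ x ∈ Icc (0:ℝ) 1, 0 ≤ f x)
    (hderiv : ∀ j : ℕ, 1 ≤ j → j ≤ k0 → ∀ x ∈ Icc (0:ℝ) 1,
      |iteratedDeriv j f x| ≤ R ^ ((j : ℝ) / β) * f x ^ ((β - j) / β))
    (hHolder : ∀ x ∈ Icc (0:ℝ) 1, ∀ y ∈ Icc (0:ℝ) 1,
      |iteratedDeriv k0 f x - iteratedDeriv k0 f y| ≤ R * |x - y| ^ (β - k0))
    (a : ℝ) (ha : 0 < a)
    (haβ : (Real.exp a - 1) + a ^ β / (Nat.factorial k0) ≤ 1 / 2) :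
    ∀ x ∈ Icc (0:ℝ) 1, ∀ h : ℝ, x + h ∈ Icc (0:ℝ) 1 →
      |h| ≤ a * (f x / R) ^ (1 / β) →
      |f (x + h) - f x| ≤ f x / 2 ∧
      f x / 2 ≤ f (x + h) ∧ f (x + h) ≤ 3 * f x / 2 :=
  stmt_3_general β hβ k0 hk0 f R hR hf hpos hderiv hHolder a ha haβ
end

section
/- For all r, x > 0 with r ≤ x, the Kullback-Leibler–type quantity D(x, r) := (n/2) ∫_0^1 (2√(t+r) - 2√t)^2 dt evaluated with the linear functions f_0(t) = t and f_1(t) = t + r satisfies (n/2) ∫_0^1 (2√(t+r) - 2√t)^2 dt ≤ 10 n r^2 log(1/r) for all 0 < r < 1/e. -/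
/-! Split the integral at `t = r`. Since `(√(t+r) - √t)(√(t+r) + √t) = r` and the second factor
dominates the first, the integrand is at most `4r`; since the second factor is at least `2√t`, the
integrand is at most `r²/t`. Using the first bound on `[0, r]` and the second on `[r, 1]`, where
`∫_r^1 r²/t dt = r² log(1/r)`, the integral is at most `4r² + r² log(1/r)`; finally
`log(1/r) > 1` for `r < 1/e` absorbs the first term. -/

open Real intervalIntegral

lemma sqrt_add_sub_sqrt_mul_sqrt_add_add_sqrt {t r : ℝ} (ht : 0 ≤ t) (hr : 0 ≤ r) :
    (√(t + r) - √t) * (√(t + r) + √t) = r := by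
  nlinarith [sq_sqrt (add_nonneg ht hr), sq_sqrt ht]

lemma sq_two_sqrt_add_sub_two_sqrt_le {t r : ℝ} (ht : 0 ≤ t) (hr : 0 ≤ r) :
    (2 * √(t + r) - 2 * √t) ^ 2 ≤ 4 * r := by
  have hmono : √t ≤ √(t + r) := sqrt_le_sqrt (by linarith)
  have hprod := sqrt_add_sub_sqrt_mul_sqrt_add_add_sqrt ht hr
  nlinarith [sqrt_nonneg t]

lemma sq_two_sqrt_add_sub_two_sqrt_le_div {t r : ℝ} (ht : 0 < t) (hr : 0 ≤ r) :
    (2 * √(t + r) - 2 * √t) ^ 2 ≤ r ^ 2 / t := by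
  have hst : 0 < √t := sqrt_pos.mpr ht
  have hmono : √t ≤ √(t + r) := sqrt_le_sqrt (by linarith)
  have hprod := sqrt_add_sub_sqrt_mul_sqrt_add_add_sqrt ht.le hr
  have hlin : 2 * √(t + r) - 2 * √t ≤ r / √t := by
    rw [le_div_iff₀ hst]; nlinarith
  calc (2 * √(t + r) - 2 * √t) ^ 2 ≤ (r / √t) ^ 2 := by gcongr; linarith
    _ = r ^ 2 / t := by rw [div_pow, sq_sqrt ht.le]

lemma continuous_sq_two_sqrt_add_sub_two_sqrt (r : ℝ) :
    Continuous fun t : ℝ => (2 * √(t + r) - 2 * √t) ^ 2 := by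
  fun_prop

lemma integral_sq_two_sqrt_add_sub_two_sqrt_zero_le {r : ℝ} (hr : 0 ≤ r) :
    ∫ t in (0:ℝ)..r, (2 * √(t + r) - 2 * √t) ^ 2 ≤ 4 * r ^ 2 := by
  calc ∫ t in (0:ℝ)..r, (2 * √(t + r) - 2 * √t) ^ 2 ≤ ∫ _ in (0:ℝ)..r, 4 * r :=
        integral_mono_on hr ((continuous_sq_two_sqrt_add_sub_two_sqrt r).intervalIntegrable _ _)
          intervalIntegrable_const fun t ht => sq_two_sqrt_add_sub_two_sqrt_le ht.1 hr
    _ = 4 * r ^ 2 := by rw [integral_const, sub_zero, smul_eq_mul]; ring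

lemma integral_sq_two_sqrt_add_sub_two_sqrt_one_le {r : ℝ} (hr0 : 0 < r) (hr1 : r ≤ 1) :
    ∫ t in r..1, (2 * √(t + r) - 2 * √t) ^ 2 ≤ r ^ 2 * log (1 / r) := by
  have hint : IntervalIntegrable (fun t => r ^ 2 * t⁻¹) MeasureTheory.volume r 1 :=
    (intervalIntegrable_inv_iff.mpr (Or.inr (by simp [Set.uIcc_of_le hr1, hr0]))).const_mul _
  calc ∫ t in r..1, (2 * √(t + r) - 2 * √t) ^ 2 ≤ ∫ t in r..1, r ^ 2 * t⁻¹ :=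
        integral_mono_on hr1 ((continuous_sq_two_sqrt_add_sub_two_sqrt r).intervalIntegrable _ _)
          hint fun t ht => (sq_two_sqrt_add_sub_two_sqrt_le_div (hr0.trans_le ht.1) hr0.le).trans_eq
            (div_eq_mul_inv _ _)
    _ = r ^ 2 * log (1 / r) := by rw [integral_const_mul, integral_inv_of_pos hr0 one_pos]

lemma integral_sq_two_sqrt_add_sub_two_sqrt_le {r : ℝ} (hr0 : 0 < r) (hr1 : r ≤ 1) :
    ∫ t in (0:ℝ)..1, (2 * √(t + r) - 2 * √t) ^ 2 ≤ 4 * r ^ 2 + r ^ 2 * log (1 / r) := by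
  have hf := continuous_sq_two_sqrt_add_sub_two_sqrt r
  rw [← integral_add_adjacent_intervals (hf.intervalIntegrable 0 r) (hf.intervalIntegrable r 1)]
  exact add_le_add (integral_sq_two_sqrt_add_sub_two_sqrt_zero_le hr0.le)
    (integral_sq_two_sqrt_add_sub_two_sqrt_one_le hr0 hr1)

lemma one_lt_log_one_div {r : ℝ} (hr0 : 0 < r) (hr1 : r < 1 / exp 1) : 1 < log (1 / r) := by
  rw [lt_log_iff_exp_lt (by positivity)]
  exact (lt_one_div (exp_pos 1) hr0).mpr hr1

theorem stmt_5 (n : ℝ) (hn : 0 < n) (r : ℝ) (hr0 : 0 < r) (hr1 : r < 1 / Real.exp 1) :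
    (n / 2) * ∫ t in (0:ℝ)..1, (2 * Real.sqrt (t + r) - 2 * Real.sqrt t) ^ 2
      ≤ 10 * n * r ^ 2 * Real.log (1 / r) := by
  have hlog := one_lt_log_one_div hr0 hr1
  have hr_le_one : r ≤ 1 := hr1.le.trans (div_le_one_of_le₀ (one_le_exp zero_le_one) (exp_pos 1).le)
  calc (n / 2) * ∫ t in (0:ℝ)..1, (2 * √(t + r) - 2 * √t) ^ 2
      ≤ (n / 2) * (4 * r ^ 2 + r ^ 2 * log (1 / r)) := by
        gcongr; exact integral_sq_two_sqrt_add_sub_two_sqrt_le hr0 hr_le_one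
    _ ≤ (n / 2) * (5 * r ^ 2 * log (1 / r)) := by gcongr; nlinarith [sq_nonneg r]
    _ ≤ 10 * n * r ^ 2 * log (1 / r) := by
        nlinarith [mul_pos (mul_pos hn (pow_pos hr0 2)) (zero_lt_one.trans hlog)]
end

section
/- Let f be ⌊β⌋-times differentiable on [0,1] with f^{(⌊β⌋)} Hölder continuous of exponent β - ⌊β⌋ and constant R (β > 0 non-integer or the statement read with ⌊β⌋ = β - 1 for integer β). Let ψ be a bounded compactly supported function with ∫ x^m ψ(x) dx = 0 for 0 ≤ m ≤ ⌊β⌋. Then for ψ_{j,k}(x) = 2^{j/2} ψ(2^j x - k), |∫ f(x) ψ_{j,k}(x) dx| ≤ C(ψ, β) · R · 2^{-j(β + 1/2)}. -/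
/-!
The vanishing moments of `ψ` survive the affine change of variables `x ↦ 2^j x - k`, so the
Taylor polynomial of `f` of degree `k0` at the centre `k / 2^j` of the support of `ψ_{j,k}`
integrates to zero against it. The Hölder condition on `f^{(k0)}` bounds the Taylor remainder by
`R |x - x₀|^β` (induction on the degree through the mean value inequality), and on the support,
of length `O(2^{-j})`, this is `O(R 2^{-jβ})`; with `‖ψ_{j,k}‖_∞ = O(2^{j/2})` the integral is
`O(R 2^{-jβ} 2^{j/2} 2^{-j})`.
-/
open Real MeasureTheory Set Metric Function

theorem abs_sub_taylorWithinEval_le_of_holder {n : ℕ} {β R : ℝ} (hnβ : n < β) (hR : 0 ≤ R)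
    {f : ℝ → ℝ} (hf : ContDiff ℝ n f)
    (hH : ∀ x y, |iteratedDeriv n f x - iteratedDeriv n f y| ≤ R * |x - y| ^ (β - n))
    (x₀ x : ℝ) :
    |f x - taylorWithinEval f n univ x₀ x| ≤ R * |x - x₀| ^ β := by
  induction n generalizing β f x with
  | zero => simpa using hH x x₀
  | succ n ih =>
    push_cast at hnβ hH
    have hf' : ContDiff ℝ n (deriv f) := (contDiff_succ_iff_deriv.mp hf).2.2
    have hH' : ∀ x y, |iteratedDeriv n (deriv f) x - iteratedDeriv n (deriv f) y|
        ≤ R * |x - y| ^ (β - 1 - n) := by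
      simpa only [← iteratedDeriv_succ', sub_sub, add_comm (1 : ℝ)] using hH
    set g := fun t => f t - taylorWithinEval f (n + 1) univ x₀ t
    have hg : ∀ t, HasDerivAt g (deriv f t - taylorWithinEval (deriv f) n univ x₀ t) t := by
      intro t
      have h := ((hf.differentiable (by simp)) t).hasDerivAt.sub
        (hasDerivAt_taylorWithinEval_succ (x := t) (x₀ := x₀) (s := univ) f n)
      rwa [derivWithin_univ] at h
    have hg' : ∀ t ∈ uIcc x₀ x, ‖deriv g t‖ ≤ R * |x - x₀| ^ (β - 1) := fun t ht => by
      rw [(hg t).deriv]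
      refine (ih (by linarith) hf' hH' t).trans (mul_le_mul_of_nonneg_left ?_ hR)
      exact rpow_le_rpow (abs_nonneg _) (abs_sub_left_of_mem_uIcc ht) (by linarith)
    have := (convex_uIcc x₀ x).norm_image_sub_le_of_norm_deriv_le
      (fun t _ => (hg t).differentiableAt) hg' left_mem_uIcc right_mem_uIcc
    simp only [g, taylorWithinEval_self, sub_self, sub_zero, norm_eq_abs] at this
    calc _ ≤ R * |x - x₀| ^ (β - 1) * |x - x₀| := this
      _ = R * |x - x₀| ^ β := by
        rw [mul_assoc, ← rpow_add_one' (abs_nonneg _) (by linarith), sub_add_cancel]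

theorem integral_comp_mul_sub {E : Type*} [NormedAddCommGroup E] [NormedSpace ℝ E]
    (h : ℝ → E) {c : ℝ} (hc : c ≠ 0) (k : ℝ) : ∫ x, h (c * x - k) = |c⁻¹| • ∫ u, h u := by
  have hpt : ∀ x, h (c * x - k) = h (c * (x - k / c)) := fun x => by
    rw [mul_sub, mul_div_cancel₀ _ hc]
  simp_rw [hpt]
  rw [integral_sub_right_eq_self (fun x => h (c * x)), Measure.integral_comp_mul_left]

theorem integral_pow_sub_div_mul_comp_mul_sub (ψ : ℝ → ℝ) (m : ℕ) {c : ℝ} (hc : c ≠ 0) (k : ℝ) :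
    ∫ x, (x - k / c) ^ m * ψ (c * x - k) = |c⁻¹| * (c ^ m)⁻¹ * ∫ u, u ^ m * ψ u := by
  have hpt : ∀ x, (x - k / c) ^ m * ψ (c * x - k) = (c ^ m)⁻¹ * ((c * x - k) ^ m * ψ (c * x - k)) :=
    fun x => by rw [show x - k / c = (c * x - k) / c by field_simp, div_pow]; field_simp
  simp_rw [hpt, integral_const_mul, integral_comp_mul_sub (fun u => u ^ m * ψ u) hc, smul_eq_mul]
  ring

theorem support_comp_mul_sub_subset {ψ : ℝ → ℝ} {A c : ℝ} (hA : support ψ ⊆ closedBall 0 A)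
    (hc : 0 < c) (k : ℝ) : support (fun x => ψ (c * x - k)) ⊆ closedBall (k / c) (A / c) := by
  intro x hx
  have := hA hx
  rw [mem_closedBall, dist_zero_right, norm_eq_abs] at this
  rw [mem_closedBall, dist_eq, le_div_iff₀ hc, ← abs_of_pos hc, ← abs_mul, abs_of_pos hc]
  rwa [sub_mul, div_mul_cancel₀ _ hc.ne', mul_comm]

theorem integrable_mul_comp_mul_sub {φ ψ : ℝ → ℝ} (hφ : Continuous φ) (hψm : Measurable ψ)
    {M A c : ℝ} (hM : ∀ u, |ψ u| ≤ M) (hA : support ψ ⊆ closedBall 0 A) (hc : 0 < c) (k : ℝ) :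
    Integrable (fun x => φ x * ψ (c * x - k)) := by
  have hsupp : support (fun x => φ x * ψ (c * x - k)) ⊆ closedBall (k / c) (A / c) :=
    (support_mul_subset_right _ _).trans (support_comp_mul_sub_subset hA hc k)
  rw [← integrableOn_iff_integrable_of_support_subset hsupp]
  refine IntegrableOn.continuousOn_mul hφ.continuousOn ?_ (isCompact_closedBall _ _)
  exact Measure.integrableOn_of_bounded (M := M) measure_closedBall_lt_top.ne
    (hψm.comp (by fun_prop)).aestronglyMeasurable (ae_of_all _ fun x => hM _)

theorem integral_taylorWithinEval_mul_comp_mul_sub_eq_zero (f : ℝ → ℝ) {ψ : ℝ → ℝ} {n : ℕ}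
    (hψm : Measurable ψ) {M A c : ℝ} (hM : ∀ u, |ψ u| ≤ M) (hA : support ψ ⊆ closedBall 0 A)
    (hmom : ∀ m ≤ n, ∫ u, u ^ m * ψ u = 0) (hc : 0 < c) (k : ℝ) :
    ∫ x, taylorWithinEval f n univ (k / c) x * ψ (c * x - k) = 0 := by
  simp_rw [taylor_within_apply, Finset.sum_mul, smul_eq_mul]
  rw [integral_finsetSum _ fun i _ => integrable_mul_comp_mul_sub (by fun_prop) hψm hM hA hc k]
  refine Finset.sum_eq_zero fun i hi => ?_
  have hpt : ∀ x, (i.factorial : ℝ)⁻¹ * (x - k / c) ^ i * iteratedDerivWithin i f univ (k / c)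
      * ψ (c * x - k) = ((i.factorial : ℝ)⁻¹ * iteratedDerivWithin i f univ (k / c))
        * ((x - k / c) ^ i * ψ (c * x - k)) := fun x => by ring
  simp_rw [hpt, integral_const_mul, integral_pow_sub_div_mul_comp_mul_sub ψ i hc.ne',
    hmom i (Finset.mem_range_succ_iff.mp hi), mul_zero]

theorem abs_integral_mul_comp_mul_sub_le {n : ℕ} {β R M A c : ℝ} (hnβ : n < β) (hR : 0 ≤ R)
    {f ψ : ℝ → ℝ} (hf : ContDiff ℝ n f)
    (hH : ∀ x y, |iteratedDeriv n f x - iteratedDeriv n f y| ≤ R * |x - y| ^ (β - n))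
    (hψm : Measurable ψ) (hM : ∀ u, |ψ u| ≤ M) (hA₀ : 0 ≤ A) (hA : support ψ ⊆ closedBall 0 A)
    (hmom : ∀ m ≤ n, ∫ u, u ^ m * ψ u = 0) (hc : 0 < c) (k : ℝ) :
    |∫ x, f x * ψ (c * x - k)| ≤ 2 * M * A ^ (β + 1) * R / c ^ (β + 1) := by
  set P := taylorWithinEval f n univ (k / c)
  set B := closedBall (k / c) (A / c)
  have hβ : 0 < β := (Nat.cast_nonneg n).trans_lt hnβ
  have hP : Continuous P := by
    change Continuous fun x => taylorWithinEval f n univ (k / c) x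
    simp_rw [taylor_within_apply]
    fun_prop
  have hremainder : ∫ x, f x * ψ (c * x - k) = ∫ x in B, (f x - P x) * ψ (c * x - k) := by
    rw [setIntegral_eq_integral_of_forall_compl_eq_zero fun x hx => ?_]
    · simp_rw [sub_mul]
      rw [integral_sub (integrable_mul_comp_mul_sub hf.continuous hψm hM hA hc k)
        (integrable_mul_comp_mul_sub hP hψm hM hA hc k),
        integral_taylorWithinEval_mul_comp_mul_sub_eq_zero f hψm hM hA hmom hc k, sub_zero]
    · have : ψ (c * x - k) = 0 :=
        notMem_support.mp fun h => hx (support_comp_mul_sub_subset hA hc k h)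
      rw [this, mul_zero]
  have hbound : ∀ x ∈ B, ‖(f x - P x) * ψ (c * x - k)‖ ≤ R * (A / c) ^ β * M := fun x hx => by
    rw [norm_mul, norm_eq_abs, norm_eq_abs]
    refine mul_le_mul ((abs_sub_taylorWithinEval_le_of_holder hnβ hR hf hH _ x).trans ?_) (hM _)
      (abs_nonneg _) (mul_nonneg hR (by positivity))
    exact mul_le_mul_of_nonneg_left (rpow_le_rpow (abs_nonneg _) hx (by positivity)) hR
  calc |∫ x, f x * ψ (c * x - k)|
      ≤ R * (A / c) ^ β * M * volume.real B := by
        rw [hremainder, ← norm_eq_abs]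
        exact norm_setIntegral_le_of_norm_le_const measure_closedBall_lt_top hbound
    _ = 2 * M * A ^ (β + 1) * R / c ^ (β + 1) := by
        rw [Real.volume_real_closedBall (by positivity), div_rpow hA₀ hc.le,
          rpow_add_one' hA₀ (by linarith), rpow_add_one hc.ne']
        ring

theorem stmt_15_general (β : ℝ) (k0 : ℕ) (hk0 : (k0 : ℝ) < β)
    (ψ : ℝ → ℝ) (hψm : Measurable ψ) (hψb : ∃ M : ℝ, ∀ x, |ψ x| ≤ M)
    (hψs : HasCompactSupport ψ)
    (hmom : ∀ m : ℕ, m ≤ k0 → ∫ x : ℝ, x ^ m * ψ x = 0) :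
    ∃ C : ℝ, 0 < C ∧
      ∀ (f : ℝ → ℝ) (R : ℝ), 0 ≤ R → ContDiff ℝ k0 f →
      (∀ x y : ℝ, |iteratedDeriv k0 f x - iteratedDeriv k0 f y| ≤ R * |x - y| ^ (β - k0)) →
      ∀ (j : ℕ) (k : ℤ),
        |∫ x : ℝ, f x * ((2:ℝ) ^ ((j : ℝ) / 2) * ψ (2 ^ j * x - k))|
          ≤ C * R * (2:ℝ) ^ (-(j : ℝ) * (β + 1 / 2)) := by
  obtain ⟨M, hM⟩ := hψb
  obtain ⟨r, hr⟩ := hψs.isBounded.subset_closedBall 0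
  set A := max r 1
  have hA : support ψ ⊆ closedBall 0 A :=
    (subset_tsupport ψ).trans (hr.trans (closedBall_subset_closedBall (le_max_left r 1)))
  refine ⟨2 * max M 1 * A ^ (β + 1), by positivity, fun f R hR hf hH j k => ?_⟩
  have hscaled := abs_integral_mul_comp_mul_sub_le hk0 hR hf hH hψm
    (fun u => (hM u).trans (le_max_left M 1)) (by positivity) hA hmom (c := 2 ^ j) (by positivity) k
  have hpow : (2 : ℝ) ^ ((j : ℝ) / 2) / ((2 : ℝ) ^ j) ^ (β + 1) = 2 ^ (-(j : ℝ) * (β + 1 / 2)) := by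
    rw [← rpow_natCast, ← rpow_mul zero_le_two, ← rpow_sub zero_lt_two]
    ring_nf
  simp_rw [mul_left_comm (f _), integral_const_mul]
  rw [abs_mul, abs_of_pos (by positivity)]
  calc _ ≤ (2 : ℝ) ^ ((j : ℝ) / 2) * (2 * max M 1 * A ^ (β + 1) * R / ((2 : ℝ) ^ j) ^ (β + 1)) :=
        mul_le_mul_of_nonneg_left hscaled (by positivity)
    _ = _ := by rw [← hpow]; ring

theorem stmt_15 (β : ℝ) (hβ : 0 < β) (k0 : ℕ) (hk0 : (k0 : ℝ) < β) (hk0' : β ≤ k0 + 1)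
    (ψ : ℝ → ℝ) (hψm : Measurable ψ) (hψb : ∃ M : ℝ, ∀ x, |ψ x| ≤ M)
    (hψs : HasCompactSupport ψ)
    (hmom : ∀ m : ℕ, m ≤ k0 → ∫ x : ℝ, x ^ m * ψ x = 0) :
    ∃ C : ℝ, 0 < C ∧
      ∀ (f : ℝ → ℝ) (R : ℝ), 0 ≤ R → ContDiff ℝ k0 f →
      (∀ x y : ℝ, |iteratedDeriv k0 f x - iteratedDeriv k0 f y| ≤ R * |x - y| ^ (β - k0)) →
      ∀ (j : ℕ) (k : ℤ),
        |∫ x : ℝ, f x * ((2:ℝ) ^ ((j : ℝ) / 2) * ψ (2 ^ j * x - k))|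
          ≤ C * R * (2:ℝ) ^ (-(j : ℝ) * (β + 1 / 2)) :=
  stmt_15_general β k0 hk0 ψ hψm hψb hψs hmom
end
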